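/- Let w be any cube-free infinite binary word and let f be the morphism defined by f(0) = 012, f(1) = 0012. Then the ternary word f(w) is (10/3)^+-free and contains at most 5 distinct palindromic factors (including the empty word). -/

import Mathlib

open List

/-- `v` occurs in the infinite word `w` at position `i`. -/
def FactorAt {A : Type} (v : List A) (w : ℕ → A) (i : ℕ) : Prop :=
  v = (List.range v.length).map fun k => w (i + k)

/-- `v` is a (finite) factor of the infinite word `w`. -/
def IsFactorInf {A : Type} (v : List A) (w : ℕ → A) : Prop :=
  ∃ i, FactorAt v w i

/-- `v` is a (finite) factor of the bi-infinite word `w`. -/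
def IsFactorBi {A : Type} (v : List A) (w : ℤ → A) : Prop :=
  ∃ i : ℤ, v = (List.range v.length).map fun k => w (i + k)

/-- `v` is a repetition with period `u`, i.e. `u ≠ ε` and `v` is a prefix of
`u^ω`; its exponent is `|v|/|u|`. -/
def IsRep {A : Type} (v u : List A) : Prop :=
  u ≠ [] ∧ v <+: (List.replicate v.length u).flatten

/-- The infinite word `w` is `β⁺`-free: every factor that is a repetition
with period `u` has exponent at most `β`. -/
def FreePlusInf {A : Type} (β : ℝ) (w : ℕ → A) : Prop :=
  ∀ v u : List A, IsFactorInf v w → IsRep v u → (v.length : ℝ) ≤ β * u.length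

/-- The infinite word `w` is `β`-free: every factor that is a repetition
with period `u` has exponent strictly less than `β`. -/
def FreeInf {A : Type} (β : ℝ) (w : ℕ → A) : Prop :=
  ∀ v u : List A, IsFactorInf v w → IsRep v u → (v.length : ℝ) < β * u.length

/-- The bi-infinite word `w` is `β⁺`-free. -/
def FreePlusBi {A : Type} (β : ℝ) (w : ℤ → A) : Prop :=
  ∀ v u : List A, IsFactorBi v w → IsRep v u → (v.length : ℝ) ≤ β * u.length

/-- The bi-infinite word `w` is `β`-free. -/
def FreeBi {A : Type} (β : ℝ) (w : ℤ → A) : Prop :=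
  ∀ v u : List A, IsFactorBi v w → IsRep v u → (v.length : ℝ) < β * u.length

/-- The finite word `w` is `β⁺`-free. -/
def FreePlusList {A : Type} (β : ℝ) (w : List A) : Prop :=
  ∀ v u : List A, v <:+: w → IsRep v u → (v.length : ℝ) ≤ β * u.length

/-- The infinite word `w` has at most `p` distinct palindromic factors
(including the empty word). -/
def AtMostPalInf {A : Type} (p : ℕ) (w : ℕ → A) : Prop :=
  ∃ S : Finset (List A), S.card ≤ p ∧ ∀ v, IsFactorInf v w → v.reverse = v → v ∈ S

/-- The bi-infinite word `w` has at most `p` distinct palindromic factors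
(including the empty word). -/
def AtMostPalBi {A : Type} (p : ℕ) (w : ℤ → A) : Prop :=
  ∃ S : Finset (List A), S.card ≤ p ∧ ∀ v, IsFactorBi v w → v.reverse = v → v ∈ S

/-- The finite word `w` has at most `p` distinct palindromic factors
(including the empty word). -/
def AtMostPalList {A : Type} (p : ℕ) (w : List A) : Prop :=
  ∃ S : Finset (List A), S.card ≤ p ∧ ∀ v, v <:+: w → v.reverse = v → v ∈ S

/-- The image of the infinite word `w` under the (non-erasing) morphism `f`,
extended letter by letter. -/
def MorphImage {A B : Type} [Inhabited B] (f : A → List B) (w : ℕ → A) : ℕ → B :=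
  fun n => (((List.range (n + 1)).map fun i => f (w i)).flatten).getD n default

/-- The morphism f : 0 ↦ 012, 1 ↦ 0012. -/
def fMor : Fin 2 → List (Fin 3) := ![[0, 1, 2], [0, 0, 1, 2]]

/-!
Each block `fMor a` contains the letter `2` exactly once, at its end, so the `2`s of `f(w)`
mark the block boundaries. A repetition of period `p` and length at least `3p + 3` therefore
shifts block boundaries to block boundaries over `2m` consecutive blocks, where `m` is the number
of blocks in one period; since the second letter of a block determines its preimage, this yields
a cube of period `m` in `w`. A shorter repetition of exponent greater than `10/3` has period at
most `5`, hence a prefix of length `⌊10p/3⌋ + 1 ≤ 17` that lies in the image of `7` consecutive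
letters of `w`; these contain no cube of period `1` or `2`, and a finite check rules it out.
Likewise every factor of length at most `4` lies in the image of two letters, which shows that
`ε, 0, 1, 2, 00` are the only palindromes of length at most `4`; a longer palindrome would have a
palindromic central factor of length `3` or `4`.
-/

section Words

variable {α : Type}

def window (x : ℕ → α) (i l : ℕ) : List α := (range l).map fun k => x (i + k)

@[simp]
theorem length_window (x : ℕ → α) (i l : ℕ) : (window x i l).length = l := by
  simp [window]

@[simp]
theorem getElem_window (x : ℕ → α) (i l k : ℕ) (hk : k < (window x i l).length) :
    (window x i l)[k] = x (i + k) := by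
  simp [window]

theorem window_add (x : ℕ → α) (i a b : ℕ) :
    window x i (a + b) = window x i a ++ window x (i + a) b := by
  simp [window, range_add, Nat.add_assoc]

theorem window_eq_ofFn (x : ℕ → α) (i l : ℕ) :
    window x i l = ofFn fun k : Fin l => x (i + k) :=
  ext_getElem (by simp) fun k _ _ => by simp

theorem factorAt_window (x : ℕ → α) (i l : ℕ) : FactorAt (window x i l) x i := by
  simp [FactorAt, window]

theorem factorAt_iff_getElem {v : List α} {x : ℕ → α} {i : ℕ} :
    FactorAt v x i ↔ ∀ k (hk : k < v.length), v[k] = x (i + k) := by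
  constructor
  · intro h k hk
    simp only [FactorAt] at h
    rw [getElem_of_eq h]
    simp
  · intro h
    exact ext_getElem (by simp) fun k h₁ _ => by simp [h k h₁]

theorem FactorAt.getElem {v : List α} {x : ℕ → α} {i k : ℕ} (h : FactorAt v x i)
    (hk : k < v.length) : v[k] = x (i + k) :=
  factorAt_iff_getElem.mp h k hk

theorem factorAt_append {u v : List α} {x : ℕ → α} {i : ℕ} :
    FactorAt (u ++ v) x i ↔ FactorAt u x i ∧ FactorAt v x (i + u.length) := by
  change u ++ v = window x i (u ++ v).length ↔
    u = window x i u.length ∧ v = window x (i + u.length) v.length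
  rw [length_append, window_add]
  exact ⟨fun h => append_inj h (by simp), fun h => by rw [← h.1, ← h.2]⟩

theorem IsFactorInf.of_infix {u v : List α} {x : ℕ → α} (hv : IsFactorInf v x)
    (h : u <:+: v) : IsFactorInf u x := by
  obtain ⟨s, t, rfl⟩ := h
  obtain ⟨i, hi⟩ := hv
  exact ⟨i + s.length, (factorAt_append.mp (factorAt_append.mp hi).1).2⟩

theorem FactorAt.eq_take_drop {v V : List α} {x : ℕ → α} {n j : ℕ} (hv : FactorAt v x n)
    (hV : FactorAt V x j) (hjn : j ≤ n) (hlen : n + v.length ≤ j + V.length) :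
    v = (V.drop (n - j)).take v.length :=
  ext_getElem (by simp; omega) fun k h₁ _ => by
    rw [getElem_take, getElem_drop, hv.getElem h₁, hV.getElem (by omega)]
    congr 1
    omega

theorem FactorAt.take {v : List α} {x : ℕ → α} {i : ℕ} (h : FactorAt v x i) (L : ℕ) :
    FactorAt (v.take L) x i :=
  (factorAt_append.mp ((take_append_drop L v).symm ▸ h)).1

end Words

section Periods

variable {α : Type}

def PeriodicOn (x : ℕ → α) (p i l : ℕ) : Prop :=
  ∀ n, i ≤ n → n + p < i + l → x (n + p) = x n

theorem IsRep.drop_prefix {v u : List α} (h : IsRep v u) : v.drop u.length <+: v := by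
  set W := (replicate v.length u).flatten
  have hW : W <+: u ++ W := by
    refine ⟨u, ?_⟩
    simp only [W, ← flatten_cons, ← replicate_succ, ← flatten_concat, ← replicate_succ']
  refine prefix_iff_getElem.mpr ⟨by simp, fun k hk => ?_⟩
  have hk' : u.length + k < v.length := by simp at hk; omega
  have hvW : v.length ≤ W.length := h.2.length_le
  calc (v.drop u.length)[k] = v[u.length + k] := by simp
    _ = W[u.length + k] := h.2.getElem hk'
    _ = (u ++ W)[u.length + k]'(by simp; omega) := hW.getElem _
    _ = W[k] := by rw [getElem_append_right (by omega)]; simp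
    _ = v[k] := (h.2.getElem _).symm

theorem take_drop_prefix_take {v : List α} {p : ℕ} (h : v.drop p <+: v) (L : ℕ) :
    (v.take L).drop p <+: v.take L := by
  refine prefix_take_iff.mpr ⟨?_, by simp⟩
  rw [drop_take]
  exact (take_prefix _ _).trans h

theorem FactorAt.periodicOn {v : List α} {x : ℕ → α} {i p : ℕ} (hv : FactorAt v x i)
    (h : v.drop p <+: v) : PeriodicOn x p i v.length := by
  intro n hn hnp
  have hk : n - i < (v.drop p).length := by simp; omega
  have := h.getElem hk
  rw [getElem_drop, hv.getElem, hv.getElem, show i + (n - i) = n by omega,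
    show i + (p + (n - i)) = n + p by omega] at this
  exact this

theorem window_three_mul {x : ℕ → α} {s m : ℕ} (h : PeriodicOn x m s (3 * m)) :
    window x s (3 * m) = window x s m ++ window x s m ++ window x s m := by
  have shift : ∀ j ≤ m, window x (s + j + m) m = window x (s + j) m := fun j hj =>
    ext_getElem (by simp) fun k hk _ => by
      simp only [getElem_window]
      simp only [length_window] at hk
      rw [← h (s + j + k) (by omega) (by omega)]
      congr 1
      omega
  have h₁ := shift 0 (Nat.zero_le _)
  have h₂ := shift m le_rfl
  simp only [Nat.add_zero] at h₁ h₂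
  rw [show 3 * m = m + m + m by ring, window_add, window_add, ← Nat.add_assoc, h₂, h₁]

end Periods

section Morphism

variable {A B : Type} (f : A → List B) (w : ℕ → A)

def blockStart (q : ℕ) : ℕ := ((window w 0 q).flatMap f).length

theorem blockStart_zero : blockStart f w 0 = 0 := by
  simp [blockStart, window]

theorem blockStart_add (q t : ℕ) :
    blockStart f w (q + t) = blockStart f w q + ((window w q t).flatMap f).length := by
  simp [blockStart, window_add]

theorem blockStart_succ (q : ℕ) :
    blockStart f w (q + 1) = blockStart f w q + (f (w q)).length := by
  simp [blockStart_add, window]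

theorem MorphImage_eq_getD [Inhabited B] (n : ℕ) :
    MorphImage f w n = ((window w 0 (n + 1)).flatMap f).getD n default := by
  simp [MorphImage, window, flatMap_def, Function.comp_def]

variable {f}

theorem mul_length_le_length_flatMap {c : ℕ} (hc : ∀ a, c ≤ (f a).length) (u : List A) :
    c * u.length ≤ (u.flatMap f).length := by
  induction u with
  | nil => simp
  | cons a u ih => simp only [length_cons, flatMap_cons, length_append]; nlinarith [hc a]

theorem blockStart_add_mul_le {c : ℕ} (hc : ∀ a, c ≤ (f a).length) (q t : ℕ) :
    blockStart f w q + c * t ≤ blockStart f w (q + t) := by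
  have := mul_length_le_length_flatMap hc (window w q t)
  rw [blockStart_add]
  simp only [length_window] at this
  omega

theorem blockStart_strictMono (hf : ∀ a, f a ≠ []) : StrictMono (blockStart f w) :=
  strictMono_nat_of_lt_succ fun q => by
    have := length_pos_of_ne_nil (hf (w q))
    rw [blockStart_succ]
    omega

theorem lt_blockStart_succ (hf : ∀ a, f a ≠ []) (n : ℕ) : n < blockStart f w (n + 1) :=
  (blockStart_strictMono w hf).le_apply.trans_lt ((blockStart_strictMono w hf) n.lt_succ_self)

theorem exists_blockStart_le_lt (hf : ∀ a, f a ≠ []) (n : ℕ) :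
    ∃ q, blockStart f w q ≤ n ∧ n < blockStart f w (q + 1) := by
  have hex : ∃ q, n < blockStart f w q := ⟨n + 1, lt_blockStart_succ w hf n⟩
  obtain ⟨q, hq⟩ : ∃ q, Nat.find hex = q + 1 := Nat.exists_eq_succ_of_ne_zero fun h => by
    have := Nat.find_spec hex
    rw [h, blockStart_zero] at this
    omega
  exact ⟨q, not_lt.mp (Nat.find_min hex (by omega)), hq ▸ Nat.find_spec hex⟩

variable [Inhabited B]

theorem MorphImage_eq_getD_of_lt (hf : ∀ a, f a ≠ []) {n N : ℕ} (hn : n < blockStart f w N) :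
    MorphImage f w n = ((window w 0 N).flatMap f).getD n default := by
  have prefix_getD : ∀ {a b}, a ≤ b → n < blockStart f w a →
      ((window w 0 a).flatMap f).getD n default = ((window w 0 b).flatMap f).getD n default := by
    intro a b hab ha
    rw [show b = a + (b - a) by omega, window_add, flatMap_append, getD_append _ _ _ _ ha]
  rw [MorphImage_eq_getD]
  rcases le_total (n + 1) N with h | h
  · exact prefix_getD h (lt_blockStart_succ w hf n)
  · exact (prefix_getD h hn).symm

theorem FactorAt.flatMap (hf : ∀ a, f a ≠ []) {u : List A} {q : ℕ} (hu : FactorAt u w q) :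
    FactorAt (u.flatMap f) (MorphImage f w) (blockStart f w q) := by
  set P := (window w 0 q).flatMap f
  have hP : blockStart f w q = P.length := rfl
  have himage : (window w 0 (q + u.length)).flatMap f = P ++ u.flatMap f := by
    have hu' : window w q u.length = u := hu.symm
    rw [window_add, flatMap_append, Nat.zero_add, hu']
  refine factorAt_iff_getElem.mpr fun k hk => ?_
  have hlt : blockStart f w q + k < blockStart f w (q + u.length) := by
    rw [hP, blockStart, himage, length_append]
    exact Nat.add_lt_add_left hk _
  rw [MorphImage_eq_getD_of_lt w hf hlt, himage, hP, getD_append_right _ _ _ _ (by omega),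
    Nat.add_sub_cancel_left, getD_eq_getElem _ _ hk]

theorem factorAt_blockStart (hf : ∀ a, f a ≠ []) (q : ℕ) :
    FactorAt (f (w q)) (MorphImage f w) (blockStart f w q) := by
  simpa [window] using (factorAt_window w q 1).flatMap w hf

theorem MorphImage_blockStart_add (hf : ∀ a, f a ≠ []) (q k : ℕ) (hk : k < (f (w q)).length) :
    MorphImage f w (blockStart f w q + k) = (f (w q))[k] :=
  ((factorAt_blockStart w hf q).getElem hk).symm

end Morphism

theorem List.Palindrome.exists_palindrome_infix_of_three_le {α : Type*} {v : List α}
    (hv : Palindrome v) (h : 3 ≤ v.length) :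
    ∃ u, u <:+: v ∧ Palindrome u ∧ 3 ≤ u.length ∧ u.length ≤ 4 := by
  induction hv with
  | nil => simp at h
  | singleton => simp at h
  | @cons_concat a l hl ih =>
    by_cases h3 : 3 ≤ l.length
    · obtain ⟨u, hu, hpal, hlen⟩ := ih h3
      exact ⟨u, hu.trans ⟨[a], [a], by simp⟩, hpal, hlen⟩
    · refine ⟨_, infix_refl _, hl.cons_concat a, h, ?_⟩
      simp at h ⊢
      omega

section Image

variable (w : ℕ → Fin 2)

local notation "σ" => blockStart fMor w

theorem fMor_ne_nil (a : Fin 2) : fMor a ≠ [] := by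
  fin_cases a <;> simp [fMor]

theorem three_le_length_fMor (a : Fin 2) : 3 ≤ (fMor a).length := by
  fin_cases a <;> simp [fMor]

theorem length_fMor_le_four (a : Fin 2) : (fMor a).length ≤ 4 := by
  fin_cases a <;> simp [fMor]

theorem fMor_getElem_eq_two_iff (a : Fin 2) {k : ℕ} (hk : k < (fMor a).length) :
    (fMor a)[k] = 2 ↔ k + 1 = (fMor a).length := by
  fin_cases a <;> simp [fMor] at hk ⊢ <;> interval_cases k <;> simp

theorem fMor_image_blockStart_add_one (q : ℕ) :
    MorphImage fMor w (σ q + 1) = ![1, 0] (w q) := by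
  rw [MorphImage_blockStart_add w fMor_ne_nil q 1 (by have := three_le_length_fMor (w q); omega)]
  have second_letter : ∀ a (h : 1 < (fMor a).length), (fMor a)[1] = ![1, 0] a := by decide
  exact second_letter _ _

theorem fMor_image_eq_two_iff (n : ℕ) : MorphImage fMor w n = 2 ↔ n + 1 ∈ Set.range σ := by
  have hσ := blockStart_strictMono w fMor_ne_nil
  obtain ⟨q, hqn, hnq⟩ := exists_blockStart_le_lt w fMor_ne_nil n
  have hsucc := blockStart_succ fMor w q
  have hk : n - σ q < (fMor (w q)).length := by omega
  rw [show n = σ q + (n - σ q) by omega, MorphImage_blockStart_add w fMor_ne_nil q _ hk,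
    fMor_getElem_eq_two_iff _ hk]
  constructor
  · intro h
    exact ⟨q + 1, by omega⟩
  · rintro ⟨j, hj⟩
    have h₁ : q < j := hσ.lt_iff_lt.mp (by omega)
    have h₂ : j ≤ q + 1 := hσ.le_iff_le.mp (by omega)
    obtain rfl : j = q + 1 := by omega
    omega

variable {w}

theorem mem_range_blockStart_add_iff {p i l b : ℕ} (hper : PeriodicOn (MorphImage fMor w) p i l)
    (hib : i < b) (hbl : b + p ≤ i + l) : b + p ∈ Set.range σ ↔ b ∈ Set.range σ := by
  obtain ⟨n, rfl⟩ : ∃ n, b = n + 1 := ⟨b - 1, by omega⟩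
  rw [show n + 1 + p = n + p + 1 by omega, ← fMor_image_eq_two_iff, ← fMor_image_eq_two_iff,
    hper n (by omega) (by omega)]

theorem blockStart_add_of_periodicOn {p i l s m : ℕ}
    (hper : PeriodicOn (MorphImage fMor w) p i l) (his : i < σ s) (hm : σ (s + m) = σ s + p)
    (k : ℕ) (hk : σ (s + k) + p ≤ i + l) :
    σ (s + k + m) = σ (s + k) + p := by
  have hσ := blockStart_strictMono w fMor_ne_nil
  induction k with
  | zero => simpa using hm
  | succ k ih =>
    rw [← Nat.add_assoc] at hk ⊢
    have hstep : σ (s + k) < σ (s + k + 1) := hσ (by omega)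
    have hs : σ s ≤ σ (s + k) := hσ.monotone (by omega)
    have ih := ih (by omega)
    obtain ⟨r, hr⟩ := (mem_range_blockStart_add_iff hper (by omega) hk).mpr ⟨_, rfl⟩
    have hr₁ : s + k + m < r := hσ.lt_iff_lt.mp (by omega)
    suffices r = s + k + 1 + m by rw [← this, hr]
    by_contra hne
    -- then the block start `σ (s + k + m + 1)` pulls back strictly between `σ (s + k)` and
    -- `σ (s + k + 1)`
    have hc₁ : σ (s + k + m) < σ (s + k + m + 1) := hσ (by omega)
    have hc₂ : σ (s + k + m + 1) < σ r := hσ (by omega)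
    obtain ⟨e, he⟩ := (mem_range_blockStart_add_iff hper (b := σ (s + k + m + 1) - p) (by omega)
      (by omega)).mp (by rw [Nat.sub_add_cancel (by omega)]; exact ⟨_, rfl⟩)
    have he₁ : s + k < e := hσ.lt_iff_lt.mp (by omega)
    have he₂ : e < s + k + 1 := hσ.lt_iff_lt.mp (by omega)
    omega

theorem exists_periodicOn_of_periodicOn_fMor_image {p i l : ℕ} (hp : 0 < p)
    (hl : 3 * p + 3 ≤ l) (hper : PeriodicOn (MorphImage fMor w) p i l) :
    ∃ s m, 0 < m ∧ PeriodicOn w m s (3 * m) := by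
  have hσ := blockStart_strictMono w fMor_ne_nil
  obtain ⟨q, hqi, his⟩ := exists_blockStart_le_lt w fMor_ne_nil i
  have hs : σ (q + 1) ≤ i + 4 := by
    have := blockStart_succ fMor w q
    have := length_fMor_le_four (w q)
    omega
  obtain ⟨j, hj⟩ := (mem_range_blockStart_add_iff hper his (by omega)).mpr ⟨_, rfl⟩
  have hsj : q + 1 < j := hσ.lt_iff_lt.mp (by omega)
  obtain ⟨m, rfl⟩ : ∃ m, j = q + 1 + m := ⟨j - (q + 1), by omega⟩
  have hshift := blockStart_add_of_periodicOn hper his hj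
  have hlast : σ (q + 1 + (m - 1)) + 3 ≤ σ (q + 1 + m) := by
    have := blockStart_add_mul_le w three_le_length_fMor (q + 1 + (m - 1)) 1
    rw [show q + 1 + (m - 1) + 1 = q + 1 + m by omega] at this
    omega
  -- the second letters of the blocks `q + 1, …, q + 2m`, shifted by `p`, stay in the window
  have hbound : ∀ k < 2 * m, σ (q + 1 + k) ≤ i + 2 * p + 1 := fun k hk => by
    have h₁ : σ (q + 1 + k) ≤ σ (q + 1 + (m - 1) + m) := hσ.monotone (by omega)
    have h₂ := hshift (m - 1) (by omega)
    omega
  refine ⟨q + 1, m, by omega, fun n hn hnm => ?_⟩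
  obtain ⟨k, rfl⟩ : ∃ k, n = q + 1 + k := ⟨n - (q + 1), by omega⟩
  have hk := hbound k (by omega)
  have hkm := hshift k (by omega)
  have hmono : σ (q + 1) ≤ σ (q + 1 + k) := hσ.monotone (by omega)
  have hletter := hper (σ (q + 1 + k) + 1) (by omega) (by omega)
  rw [show σ (q + 1 + k) + 1 + p = σ (q + 1 + k + m) + 1 by omega, fMor_image_blockStart_add_one,
    fMor_image_blockStart_add_one] at hletter
  exact (by decide : Function.Injective ![(1 : Fin 3), 0]) hletter

variable (w)

theorem exists_eq_take_drop_fMor_image {v : List (Fin 3)} (t : ℕ)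
    (hv : IsFactorInf v (MorphImage fMor w)) (hlen : v.length + 2 ≤ 3 * t) :
    ∃ g : Fin t → Fin 2, IsFactorInf (ofFn g) w ∧
      ∃ a < 4, v = (((ofFn g).flatMap fMor).drop a).take v.length := by
  obtain ⟨n, hn⟩ := hv
  obtain ⟨q, hqn, hnq⟩ := exists_blockStart_le_lt w fMor_ne_nil n
  have hsucc := blockStart_succ fMor w q
  refine ⟨fun r => w (q + r), ⟨q, window_eq_ofFn w q t ▸ factorAt_window w q t⟩, n - σ q,
    by have := length_fMor_le_four (w q); omega, ?_⟩
  rw [← window_eq_ofFn]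
  refine hn.eq_take_drop ((factorAt_window w q t).flatMap w fMor_ne_nil) hqn ?_
  have h₁ := blockStart_add fMor w q t
  have h₂ := blockStart_add_mul_le w three_le_length_fMor (q + 1) (t - 1)
  rw [show q + 1 + (t - 1) = q + t by omega] at h₂
  omega

set_option maxRecDepth 10000 in
theorem fMor_image_take_not_periodic : ∀ g : Fin 7 → Fin 2,
    (∀ c ∈ ([[0], [1], [0, 0], [0, 1], [1, 0], [1, 1]] : List (List (Fin 2))),
      ¬ c ++ c ++ c <:+: ofFn g) →
    ∀ a < 4, ∀ p < 6, 0 < p →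
      ¬ ((((ofFn g).flatMap fMor).drop a).take (10 * p / 3 + 1)).drop p <+:
        (((ofFn g).flatMap fMor).drop a).take (10 * p / 3 + 1) := by
  decide

theorem freePlusInf_fMor_image
    (hcf : ∀ u : List (Fin 2), u ≠ [] → ¬ IsFactorInf (u ++ u ++ u) w) :
    FreePlusInf (10 / 3) (MorphImage fMor w) := by
  rintro v u ⟨i, hv⟩ hrep
  set p := u.length
  have hp : 0 < p := length_pos_of_ne_nil hrep.1
  have hvp := hrep.drop_prefix
  suffices h : 3 * v.length ≤ 10 * p by
    have : (3 * v.length : ℝ) ≤ 10 * p := by exact_mod_cast h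
    linarith
  by_contra! hlong
  rcases le_or_gt (3 * p + 3) v.length with hl | hl
  · obtain ⟨s, m, hm, hperw⟩ :=
      exists_periodicOn_of_periodicOn_fMor_image hp hl (hv.periodicOn hvp)
    refine hcf (window w s m) (ne_nil_of_length_pos (by simpa using hm)) ⟨s, ?_⟩
    rw [← window_three_mul hperw]
    simpa using factorAt_window w s (3 * m)
  · have hL : 10 * p / 3 + 1 ≤ v.length := by omega
    obtain ⟨g, hg, a, ha, heq⟩ :=
      exists_eq_take_drop_fMor_image w 7 ⟨i, hv.take (10 * p / 3 + 1)⟩ (by simp; omega)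
    refine fMor_image_take_not_periodic g (fun c hc hcube => ?_) a ha p (by omega) hp ?_
    · exact hcf c (by rintro rfl; simp at hc) (hg.of_infix hcube)
    · rw [length_take, min_eq_left hL] at heq
      exact heq ▸ take_drop_prefix_take hvp _

theorem fMor_image_take_palindrome : ∀ g : Fin 2 → Fin 2, ∀ a < 4, ∀ n ≤ 4,
    Palindrome ((((ofFn g).flatMap fMor).drop a).take n) →
      (((ofFn g).flatMap fMor).drop a).take n ∈
        ({[], [0], [1], [2], [0, 0]} : Finset (List (Fin 3))) := by
  decide

theorem atMostPalInf_fMor_image : AtMostPalInf 5 (MorphImage fMor w) := by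
  have short : ∀ v, IsFactorInf v (MorphImage fMor w) → Palindrome v → v.length ≤ 4 →
      v ∈ ({[], [0], [1], [2], [0, 0]} : Finset (List (Fin 3))) := fun v hv hpal hlen => by
    obtain ⟨g, -, a, ha, heq⟩ := exists_eq_take_drop_fMor_image w 2 hv (by omega)
    rw [heq] at hpal ⊢
    exact fMor_image_take_palindrome g a ha _ hlen hpal
  refine ⟨{[], [0], [1], [2], [0, 0]}, by decide, fun v hv hrev => ?_⟩
  have hpal := Palindrome.of_reverse_eq hrev
  rcases le_or_gt v.length 4 with hlen | hlen
  · exact short v hv hpal hlen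
  · obtain ⟨u, hu, hupal, h₃, h₄⟩ := hpal.exists_palindrome_infix_of_three_le (by omega)
    have hmem := short u (hv.of_infix hu) hupal h₄
    simp only [Finset.mem_insert, Finset.mem_singleton] at hmem
    rcases hmem with rfl | rfl | rfl | rfl | rfl <;> simp at h₃

end Image

/-- For any cube-free infinite binary word `w`, the ternary word `f(w)` is
`(10/3)⁺`-free and contains at most 5 distinct palindromic factors
(including the empty word). -/
theorem stmt7 (w : ℕ → Fin 2)
    (hcf : ∀ u : List (Fin 2), u ≠ [] → ¬ IsFactorInf (u ++ u ++ u) w) :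
    FreePlusInf (10 / 3) (MorphImage fMor w) ∧
    AtMostPalInf 5 (MorphImage fMor w) :=
  ⟨freePlusInf_fMor_image w hcf, atMostPalInf_fMor_image w⟩
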